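/- Let φ: P → Q be a morphism of connected CDGAs with P a Poincaré duality CDGA in dimension n, let φ! := θ_P^{-1} ∘ (s^{-n}#φ) : s^{-n}#Q → P, and assume φ∘φ! is balanced. Then the mapping cones P ⊕_{φ!} ss^{-n}#Q and Q ⊕_{φφ!} ss^{-n}#Q, each equipped with the semi-trivial structure, are CDGAs, and the map φ ⊕ id : P ⊕_{φ!} ss^{-n}#Q → Q ⊕_{φφ!} ss^{-n}#Q, (p, s x) ↦ (φ(p), s x), is a morphism of CDGAs. -/

import Mathlib

/-!
Common framework: commutative differential graded algebras (CDGAs) over `ℚ`,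
differential graded modules, linear duals (represented via perfect pairings),
mapping cones with their semi-trivial multiplication, Poincaré duality CDGAs,
orientations, orphans, and Sullivan extensions.

A CDGA over `ℚ` is presented as a (possibly non-commutative) ring `A` which is a
`ℚ`-algebra, together with an internal `ℕ`-grading by `ℚ`-subspaces for which
`A` is the internal direct sum of the pieces, such that the product is graded
(with graded commutativity `a·b = (-1)^{|a||b|} b·a`), and a degree `+1`
`ℚ`-linear differential squaring to zero and satisfying the Leibniz rule.
-/

noncomputable section

structure CDGAStruct (A : Type) [Ring A] [Algebra ℚ A] : Type where
  gr : ℕ → Submodule ℚ A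
  internal : DirectSum.IsInternal gr
  one_mem : (1 : A) ∈ gr 0
  mul_mem : ∀ {i j : ℕ} {a b : A}, a ∈ gr i → b ∈ gr j → a * b ∈ gr (i + j)
  gcomm : ∀ {i j : ℕ} {a b : A}, a ∈ gr i → b ∈ gr j →
    a * b = ((-1 : ℚ) ^ (i * j)) • (b * a)
  d : A →ₗ[ℚ] A
  d_mem : ∀ {i : ℕ} {a : A}, a ∈ gr i → d a ∈ gr (i + 1)
  d_sq : ∀ a : A, d (d a) = 0
  leibniz : ∀ {i : ℕ} (a b : A), a ∈ gr i →
    d (a * b) = d a * b + ((-1 : ℚ) ^ i) • (a * d b)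

namespace CDGAStruct

variable {A : Type} [Ring A] [Algebra ℚ A]

/-- The grading of a CDGA extended to `ℤ` (zero in negative degrees). -/
def grZ (SA : CDGAStruct A) : ℤ → Submodule ℚ A :=
  fun j => if 0 ≤ j then SA.gr j.toNat else ⊥

/-- A CDGA is connected if `A⁰ = ℚ·1 ≅ ℚ`. -/
def Connected (SA : CDGAStruct A) : Prop :=
  ∀ a ∈ SA.gr 0, ∃! q : ℚ, a = q • (1 : A)

/-- A CDGA is of finite type if each graded piece is finite dimensional. -/
def FiniteType (SA : CDGAStruct A) : Prop :=
  ∀ i : ℕ, FiniteDimensional ℚ (SA.gr i)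

end CDGAStruct

/-- A morphism of CDGAs: a `ℚ`-linear map which is unital, multiplicative,
preserves the gradings and commutes with the differentials. -/
def IsCDGAHom {A B : Type} [Ring A] [Algebra ℚ A] [Ring B] [Algebra ℚ B]
    (SA : CDGAStruct A) (SB : CDGAStruct B) (f : A →ₗ[ℚ] B) : Prop :=
  f 1 = 1 ∧ (∀ a a' : A, f (a * a') = f a * f a') ∧
    (∀ i : ℕ, ∀ a ∈ SA.gr i, f a ∈ SB.gr i) ∧ ∀ a, f (SA.d a) = SB.d (f a)

/-- A differential graded module (`ℤ`-graded) over the CDGA `(A, SA)`. -/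
structure DGModStruct {A : Type} [Ring A] [Algebra ℚ A] (SA : CDGAStruct A)
    (M : Type) [AddCommGroup M] [Module ℚ M] : Type where
  gr : ℤ → Submodule ℚ M
  internal : DirectSum.IsInternal gr
  smul : A →ₗ[ℚ] M →ₗ[ℚ] M
  one_smul : ∀ m : M, smul 1 m = m
  mul_smul : ∀ (a b : A) (m : M), smul (a * b) m = smul a (smul b m)
  smul_mem : ∀ {i : ℕ} {j : ℤ} {a : A} {m : M},
    a ∈ SA.gr i → m ∈ gr j → smul a m ∈ gr (i + j)
  d : M →ₗ[ℚ] M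
  d_mem : ∀ {j : ℤ} {m : M}, m ∈ gr j → d m ∈ gr (j + 1)
  d_sq : ∀ m : M, d (d m) = 0
  leibniz : ∀ {i : ℕ} (a : A) (m : M), a ∈ SA.gr i →
    d (smul a m) = smul (SA.d a) m + ((-1 : ℚ) ^ i) • smul a (d m)

/-- `SM` is the tautological dg-module structure of a CDGA over itself. -/
def IsSelfMod {A : Type} [Ring A] [Algebra ℚ A] (SA : CDGAStruct A)
    (SM : DGModStruct SA A) : Prop :=
  (∀ j : ℤ, SM.gr j = SA.grZ j) ∧ (∀ a b : A, SM.smul a b = a * b) ∧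
    ∀ a : A, SM.d a = SA.d a

/-- `SMA` is the `A`-dg-module structure induced from the `B`-dg-module
structure `SMB` by restriction along the CDGA morphism `φ : A → B`. -/
def IsModViaHom {A B : Type} [Ring A] [Algebra ℚ A] [Ring B] [Algebra ℚ B]
    (SA : CDGAStruct A) (SB : CDGAStruct B) (φ : A →ₗ[ℚ] B)
    {M : Type} [AddCommGroup M] [Module ℚ M]
    (SMB : DGModStruct SB M) (SMA : DGModStruct SA M) : Prop :=
  (∀ j : ℤ, SMA.gr j = SMB.gr j) ∧ (∀ (a : A) (m : M), SMA.smul a m = SMB.smul (φ a) m) ∧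
    ∀ m : M, SMA.d m = SMB.d m

/-- A (degree `0`) morphism of dg-modules over a fixed CDGA. -/
def IsDGModHom {A : Type} [Ring A] [Algebra ℚ A] {SA : CDGAStruct A}
    {M N : Type} [AddCommGroup M] [Module ℚ M] [AddCommGroup N] [Module ℚ N]
    (SM : DGModStruct SA M) (SN : DGModStruct SA N) (f : M →ₗ[ℚ] N) : Prop :=
  (∀ j : ℤ, ∀ m ∈ SM.gr j, f m ∈ SN.gr j) ∧
    (∀ (a : A) (m : M), f (SM.smul a m) = SN.smul a (f m)) ∧
    ∀ m : M, f (SM.d m) = SN.d (f m)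

/-- A (degree `0`) morphism of `A`-dg-modules with target the CDGA `A` itself. -/
def IsDGHomToAlg {A : Type} [Ring A] [Algebra ℚ A] (SA : CDGAStruct A)
    {M : Type} [AddCommGroup M] [Module ℚ M]
    (SM : DGModStruct SA M) (f : M →ₗ[ℚ] A) : Prop :=
  (∀ j : ℤ, ∀ m ∈ SM.gr j, f m ∈ SA.grZ j) ∧
    (∀ (a : A) (m : M), f (SM.smul a m) = a * f m) ∧
    ∀ m : M, f (SM.d m) = SA.d (f m)

/-- An `A`-dg-module morphism `f : M → A` is balanced when `f(x)·y = x·f(y)`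
for all `x, y ∈ M`; here `x·f(y) = (-1)^{|x||f(y)|} f(y)·x` by the usual Koszul
sign rule, and `|f(y)| = |y|` since `f` has degree `0`. -/
def IsBalanced {A : Type} [Ring A] [Algebra ℚ A] (SA : CDGAStruct A)
    {M : Type} [AddCommGroup M] [Module ℚ M]
    (SM : DGModStruct SA M) (f : M →ₗ[ℚ] A) : Prop :=
  ∀ (i j : ℤ) (x y : M), x ∈ SM.gr i → y ∈ SM.gr j →
    SM.smul (f x) y = ((-1 : ℚ) ^ (i * j)) • SM.smul (f y) x

/-- `SD` realizes the shifted linear dual `s^{-n}#M` of the `A`-dg-module `M`: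
the structure carries a pairing `⟨-,-⟩ : D ⊗ M → ℚ` which vanishes except
between degrees `p` and `n - p`, is perfect in each degree, and satisfies
`⟨d f, x⟩ = -(-1)^{|f|} ⟨f, d x⟩` and `⟨a·f, x⟩ = (-1)^{|a||f|} ⟨f, a·x⟩`
(the standard dual dg-module structure `(a·f)(x) = (-1)^{|a||f|} f(a·x)` with
the dual differential). -/
structure DualRep {A : Type} [Ring A] [Algebra ℚ A] (SA : CDGAStruct A)
    {M : Type} [AddCommGroup M] [Module ℚ M] (SM : DGModStruct SA M) (n : ℤ)
    {D : Type} [AddCommGroup D] [Module ℚ D] (SD : DGModStruct SA D) : Type where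
  pair : D →ₗ[ℚ] M →ₗ[ℚ] ℚ
  pair_deg : ∀ {p q : ℤ} {f : D} {x : M}, f ∈ SD.gr p → x ∈ SM.gr q →
    p + q ≠ n → pair f x = 0
  nondeg : ∀ {p : ℤ} (f : D), f ∈ SD.gr p → (∀ x ∈ SM.gr (n - p), pair f x = 0) → f = 0
  surj : ∀ (p : ℤ) (φ : M →ₗ[ℚ] ℚ), ∃ f ∈ SD.gr p, ∀ x ∈ SM.gr (n - p), pair f x = φ x
  d_pair : ∀ {p : ℤ} (f : D) (x : M), f ∈ SD.gr p →
    pair (SD.d f) x = -(((-1 : ℚ) ^ p) * pair f (SM.d x))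
  smul_pair : ∀ {i : ℕ} {p : ℤ} (a : A) (f : D) (x : M), a ∈ SA.gr i → f ∈ SD.gr p →
    pair (SD.smul a f) x = ((-1 : ℚ) ^ ((i : ℤ) * p)) * pair f (SM.smul a x)

/-- A bundled dg-module over the CDGA `(A, SA)`. -/
structure DGMod {A : Type} [Ring A] [Algebra ℚ A] (SA : CDGAStruct A) : Type 1 where
  carrier : Type
  [acg : AddCommGroup carrier]
  [mod : Module ℚ carrier]
  str : DGModStruct SA carrier

attribute [instance] DGMod.acg DGMod.mod

/-- `SA` is a Poincaré duality CDGA in dimension `n`: it is connected, of finite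
type, and there is an isomorphism of `A`-dg-modules `θ : A ≅ s^{-n}#A`. -/
def IsPDCDGA {A : Type} [Ring A] [Algebra ℚ A] (SA : CDGAStruct A) (n : ℤ) : Prop :=
  SA.Connected ∧ SA.FiniteType ∧
    ∃ SAm : DGModStruct SA A, IsSelfMod SA SAm ∧
      ∃ (DM : DGMod SA) (_ : DualRep SA SAm n DM.str) (θ : A →ₗ[ℚ] DM.carrier),
        IsDGModHom SAm DM.str θ ∧ Function.Bijective θ

section Cohomology

variable {M N : Type} [AddCommGroup M] [Module ℚ M] [AddCommGroup N] [Module ℚ N]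

def IsCocycle (gr : ℤ → Submodule ℚ M) (d : M →ₗ[ℚ] M) (j : ℤ) (x : M) : Prop :=
  x ∈ gr j ∧ d x = 0

def IsCoboundary (gr : ℤ → Submodule ℚ M) (d : M →ₗ[ℚ] M) (j : ℤ) (x : M) : Prop :=
  ∃ y ∈ gr (j - 1), d y = x

/-- `H^j` vanishes: every cocycle of degree `j` is a coboundary. -/
def CohVanishAt (gr : ℤ → Submodule ℚ M) (d : M →ₗ[ℚ] M) (j : ℤ) : Prop :=
  ∀ x, IsCocycle gr d j x → IsCoboundary gr d j x

/-- The chain map `f` induces an isomorphism `H^j(M) → H^j(N)` (surjectivity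
and injectivity on cohomology classes in degree `j`). -/
def CohomIsoAt (grM : ℤ → Submodule ℚ M) (dM : M →ₗ[ℚ] M)
    (grN : ℤ → Submodule ℚ N) (dN : N →ₗ[ℚ] N) (f : M →ₗ[ℚ] N) (j : ℤ) : Prop :=
  (∀ y, IsCocycle grN dN j y →
    ∃ x, IsCocycle grM dM j x ∧ IsCoboundary grN dN j (f x - y)) ∧
  ∀ x, IsCocycle grM dM j x → IsCoboundary grN dN j (f x) → IsCoboundary grM dM j x

def IsQuasiIsoGr (grM : ℤ → Submodule ℚ M) (dM : M →ₗ[ℚ] M)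
    (grN : ℤ → Submodule ℚ N) (dN : N →ₗ[ℚ] N) (f : M →ₗ[ℚ] N) : Prop :=
  ∀ j : ℤ, CohomIsoAt grM dM grN dN f j

/-- The degree-`j` cohomology of a graded cochain complex, as a `ℚ`-module. -/
abbrev cohomologyAt (gr : ℤ → Submodule ℚ M) (d : M →ₗ[ℚ] M) (j : ℤ) : Type :=
  ↥(gr j ⊓ LinearMap.ker d) ⧸
    Submodule.comap (gr j ⊓ LinearMap.ker d).subtype (LinearMap.range d)

end Cohomology

/-- A quasi-isomorphism of CDGAs (on underlying linear maps). -/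
def IsQuasiIsoCDGA {A B : Type} [Ring A] [Algebra ℚ A] [Ring B] [Algebra ℚ B]
    (SA : CDGAStruct A) (SB : CDGAStruct B) (f : A →ₗ[ℚ] B) : Prop :=
  IsQuasiIsoGr SA.grZ SA.d SB.grZ SB.d f

/-- `H(A)` is a Poincaré duality algebra in dimension `n`: `H⁰ = ℚ`,
`H^{>n} = 0`, `dim H^n = 1` and the multiplication pairing
`H^k ⊗ H^{n-k} → H^n ≅ ℚ` is non-degenerate (expressed elementwise via a
linear functional `ε` representing evaluation against the fundamental class). -/
def CohomologyPD {A : Type} [Ring A] [Algebra ℚ A] (SA : CDGAStruct A) (n : ℕ) : Prop :=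
  (∀ a ∈ SA.gr 0, SA.d a = 0 → ∃ q : ℚ, a = q • (1 : A)) ∧
  (∀ j : ℤ, (n : ℤ) < j → CohVanishAt SA.grZ SA.d j) ∧
  ∃ ε : A →ₗ[ℚ] ℚ,
    (∀ i : ℕ, i ≠ n → ∀ a ∈ SA.gr i, ε a = 0) ∧
    (∀ a : A, ε (SA.d a) = 0) ∧
    (∃ a ∈ SA.gr n, SA.d a = 0 ∧ ε a = 1) ∧
    (∀ a ∈ SA.gr n, SA.d a = 0 → ε a = 0 → IsCoboundary SA.grZ SA.d (n : ℤ) a) ∧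
    ∀ i : ℕ, i ≤ n → ∀ a ∈ SA.gr i, SA.d a = 0 →
      ¬ IsCoboundary SA.grZ SA.d (i : ℤ) a →
        ∃ b ∈ SA.gr (n - i), SA.d b = 0 ∧ ε (a * b) ≠ 0

/-- `H(A)` is `1`-connected: `H⁰(A) = ℚ` and `H¹(A) = 0`. -/
def CohOneConnected {A : Type} [Ring A] [Algebra ℚ A] (SA : CDGAStruct A) : Prop :=
  (∀ a ∈ SA.gr 0, SA.d a = 0 → ∃ q : ℚ, a = q • (1 : A)) ∧
  ∀ a ∈ SA.gr 1, SA.d a = 0 → ∃ b ∈ SA.gr 0, SA.d b = a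

section Cone

variable {A : Type} [Ring A] [Algebra ℚ A] {M : Type} [AddCommGroup M] [Module ℚ M]

/-- The grading of the mapping cone `C(f) = A ⊕ sM` of a dg-module morphism
`f : M → A`:  `C(f)^p = A^p ⊕ (sM)^p = A^p ⊕ M^{p+1}`. -/
def coneGr (SA : CDGAStruct A) (SM : DGModStruct SA M) : ℤ → Submodule ℚ (A × M) :=
  fun p => (SA.grZ p).prod (SM.gr (p + 1))

/-- The differential of the mapping cone `C(f) = A ⊕_f sM`:
`δ(a, sm) = (d a + f m, -s (d m))`. -/
def coneD (SA : CDGAStruct A) (SM : DGModStruct SA M) (f : M →ₗ[ℚ] A) :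
    A × M →ₗ[ℚ] A × M :=
  (SA.d ∘ₗ LinearMap.fst ℚ A M + f ∘ₗ LinearMap.snd ℚ A M).prod
    (-(SM.d ∘ₗ LinearMap.snd ℚ A M))

/-- The semi-trivial product on the mapping cone `A ⊕ sM`: it is the unique
graded-commutative product extending the product of `A` and the `A`-module
structure of `sM` (with the Koszul sign `a·(sm) = (-1)^{|a|} s(a·m)`), and with
`(sm)·(sm') = 0`. -/
def SemiTrivialMul (SA : CDGAStruct A) (SM : DGModStruct SA M)
    (μ : A × M →ₗ[ℚ] A × M →ₗ[ℚ] A × M) : Prop :=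
  (∀ a a' : A, μ (a, 0) (a', 0) = (a * a', 0)) ∧
  (∀ (i : ℕ) (a : A) (m : M), a ∈ SA.gr i →
    μ (a, 0) (0, m) = (0, ((-1 : ℚ) ^ i) • SM.smul a m)) ∧
  (∀ (i : ℕ) (j : ℤ) (a : A) (m : M), a ∈ SA.gr i → m ∈ SM.gr j →
    μ (0, m) (a, 0) = (0, ((-1 : ℚ) ^ (j * (i : ℤ))) • SM.smul a m)) ∧
  ∀ m m' : M, μ (0, m) (0, m') = 0

end Cone

/-- The data `(gr, 1, μ, d)` on `C` is a (`ℤ`-graded) CDGA: internal grading,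
unital associative graded-commutative product, degree `+1` differential
squaring to zero and satisfying the Leibniz rule. -/
def IsGCDGA {C : Type} [AddCommGroup C] [Module ℚ C]
    (gr : ℤ → Submodule ℚ C) (one : C) (μ : C →ₗ[ℚ] C →ₗ[ℚ] C) (d : C →ₗ[ℚ] C) : Prop :=
  DirectSum.IsInternal gr ∧
  one ∈ gr 0 ∧
  (∀ x, μ one x = x) ∧ (∀ x, μ x one = x) ∧
  (∀ x y z : C, μ (μ x y) z = μ x (μ y z)) ∧
  (∀ (i j : ℤ) (x y : C), x ∈ gr i → y ∈ gr j → μ x y ∈ gr (i + j)) ∧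
  (∀ (i j : ℤ) (x y : C), x ∈ gr i → y ∈ gr j → μ x y = ((-1 : ℚ) ^ (i * j)) • μ y x) ∧
  (∀ j : ℤ, ∀ x ∈ gr j, d x ∈ gr (j + 1)) ∧
  (∀ x, d (d x) = 0) ∧
  ∀ (i : ℤ) (x y : C), x ∈ gr i → d (μ x y) = μ (d x) y + ((-1 : ℚ) ^ i) • μ x (d y)

/-- A morphism of (`ℤ`-graded) differential graded algebras presented by
`(grading, unit, product, differential)` data. -/
def IsGradedDGAHom {C D : Type} [AddCommGroup C] [Module ℚ C] [AddCommGroup D] [Module ℚ D]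
    (grC : ℤ → Submodule ℚ C) (oneC : C) (μC : C →ₗ[ℚ] C →ₗ[ℚ] C) (dC : C →ₗ[ℚ] C)
    (grD : ℤ → Submodule ℚ D) (oneD : D) (μD : D →ₗ[ℚ] D →ₗ[ℚ] D) (dD : D →ₗ[ℚ] D)
    (g : C →ₗ[ℚ] D) : Prop :=
  g oneC = oneD ∧ (∀ x y : C, g (μC x y) = μD (g x) (g y)) ∧
    (∀ j : ℤ, ∀ x ∈ grC j, g x ∈ grD j) ∧ ∀ x, g (dC x) = dD (g x)

/-- An orientation in degree `n` of a CDGA: a chain map `ε : A → s^{-n}ℚ`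
(i.e., `ε` is supported in degree `n` and kills boundaries) which is surjective
in cohomology. -/
def IsOrientation {A : Type} [Ring A] [Algebra ℚ A] (SA : CDGAStruct A) (n : ℕ)
    (ε : A →ₗ[ℚ] ℚ) : Prop :=
  (∀ i : ℕ, i ≠ n → ∀ a ∈ SA.gr i, ε a = 0) ∧ (∀ a : A, ε (SA.d a) = 0) ∧
    ∃ a ∈ SA.gr n, SA.d a = 0 ∧ ε a ≠ 0

/-- The orphan ideal `O(A, ε) = {a ∈ A | ∀ b, ε(a·b) = 0}` of an oriented CDGA. -/
def orphans {A : Type} [Ring A] [Algebra ℚ A] (_SA : CDGAStruct A) (ε : A →ₗ[ℚ] ℚ) :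
    Submodule ℚ A where
  carrier := { a : A | ∀ b : A, ε (a * b) = 0 }
  add_mem' := by
    intro a a' ha ha'
    intro b
    rw [add_mul, map_add, ha b, ha' b, add_zero]
  zero_mem' := by
    intro b
    rw [zero_mul, map_zero]
  smul_mem' := by
    intro c a ha
    intro b
    rw [smul_mul_assoc, map_smul, ha b, smul_zero]

/-- The orphan ideal is acyclic: it has vanishing cohomology in all degrees. -/
def OrphansAcyclic {A : Type} [Ring A] [Algebra ℚ A] (SA : CDGAStruct A)
    (ε : A →ₗ[ℚ] ℚ) : Prop :=
  ∀ (j : ℕ) (x : A), x ∈ orphans SA ε → x ∈ SA.gr j → SA.d x = 0 →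
    ∃ y ∈ orphans SA ε, y ∈ SA.gr (j - 1) ∧ SA.d y = x

/-- A (relative) Sullivan extension `(A, d) ↪ (Â = A ⊗ ΛV, d̂)`: an injective
CDGA morphism `inc : A → Â` together with a graded subspace `V ⊆ Â` of
generators such that `Â` is the free graded-commutative `A`-algebra on `V`
(expressed by the universal property), and `V` admits an exhaustive increasing
filtration `F 0 ⊆ F 1 ⊆ ⋯` with `d̂(F (k+1)) ⊆ A ⊗ ΛF k` and `d̂(F 0) ⊆ A`. -/
structure SullivanExtension {A Ahat : Type} [Ring A] [Algebra ℚ A]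
    [Ring Ahat] [Algebra ℚ Ahat]
    (SA : CDGAStruct A) (SH : CDGAStruct Ahat) : Type 1 where
  inc : A →ₗ[ℚ] Ahat
  hom : IsCDGAHom SA SH inc
  inj : Function.Injective inc
  V : ℕ → Submodule ℚ Ahat
  V_deg : ∀ i : ℕ, V i ≤ SH.gr i
  free : ∀ (B : Type) [Ring B] [Algebra ℚ B] (SB : CDGAStruct B) (g : A →ₗ[ℚ] B),
    g 1 = 1 → (∀ a a' : A, g (a * a') = g a * g a') →
    (∀ i : ℕ, ∀ a ∈ SA.gr i, g a ∈ SB.gr i) →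
    ∀ h : Ahat →ₗ[ℚ] B, (∀ i : ℕ, ∀ v ∈ V i, h v ∈ SB.gr i) →
    ∃! G : Ahat →ₗ[ℚ] B, G 1 = 1 ∧ (∀ x y : Ahat, G (x * y) = G x * G y) ∧
      (∀ i : ℕ, ∀ x ∈ SH.gr i, G x ∈ SB.gr i) ∧
      (∀ a : A, G (inc a) = g a) ∧ ∀ i : ℕ, ∀ v ∈ V i, G v = h v
  filt : ∃ F : ℕ → Submodule ℚ Ahat,
    (∀ k : ℕ, F k ≤ F (k + 1)) ∧ (∀ k : ℕ, F k ≤ ⨆ i, V i) ∧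
    ((⨆ i, V i) ≤ ⨆ k, F k) ∧
    (∀ v ∈ F 0, SH.d v ∈ Algebra.adjoin ℚ (Set.range inc)) ∧
    ∀ k : ℕ, ∀ v ∈ F (k + 1),
      SH.d v ∈ Algebra.adjoin ℚ (Set.range inc ∪ (F k : Set Ahat))

/-- A bundled CDGA over `ℚ`. -/
structure CDGA : Type 1 where
  carrier : Type
  [ring : Ring carrier]
  [alg : Algebra ℚ carrier]
  str : CDGAStruct carrier

attribute [instance] CDGA.ring CDGA.alg

/-- A bundled morphism of CDGAs. -/
structure CDGAMor : Type 1 where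
  src : CDGA
  tgt : CDGA
  map : src.carrier →ₗ[ℚ] tgt.carrier
  isHom : IsCDGAHom src.str tgt.str map

/-- One step of weak equivalence between CDGA morphisms: a commutative square
whose horizontal maps are quasi-isomorphisms of CDGAs. -/
def MorWeakEqStep (m m' : CDGAMor) : Prop :=
  ∃ (α : m.src.carrier →ₗ[ℚ] m'.src.carrier) (β : m.tgt.carrier →ₗ[ℚ] m'.tgt.carrier),
    IsCDGAHom m.src.str m'.src.str α ∧ IsQuasiIsoCDGA m.src.str m'.src.str α ∧
    IsCDGAHom m.tgt.str m'.tgt.str β ∧ IsQuasiIsoCDGA m.tgt.str m'.tgt.str β ∧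
    β ∘ₗ m.map = m'.map ∘ₗ α

/-- Two CDGA morphisms are weakly equivalent if they are connected by a finite
zigzag of commutative squares whose horizontal maps are quasi-isomorphisms. -/
def MorWeakEq : CDGAMor → CDGAMor → Prop := Relation.EqvGen MorWeakEqStep

/-- Two CDGAs are weakly equivalent if they are connected by a finite zigzag of
quasi-isomorphisms of CDGAs. -/
def CDGAWeakEq : CDGA → CDGA → Prop :=
  Relation.EqvGen fun X Y =>
    ∃ f : X.carrier →ₗ[ℚ] Y.carrier, IsCDGAHom X.str Y.str f ∧ IsQuasiIsoCDGA X.str Y.str f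

end


/-!
The mapping cone `A ⊕_f sM` of a balanced `A`-dg-module map `f : M → A`, with the semi-trivial
product, is a CDGA: every axiom is multilinear, so it suffices to check it on the pure elements
`(a, 0)` and `(0, m)`, and balance of `f` is exactly the Leibniz rule for two elements of `sM`.

For `P ⊕_{φ^!} ss^{-n}#Q`: `φ` is a map of `P`-dg-modules `P → Q`, so its transpose `#φ`, and
with it `φ^! = θ_P⁻¹ ∘ #φ`, is one as well; `φ^!` is balanced because `φ φ^!` is.

For `Q ⊕_{φφ^!} ss^{-n}#Q` the one non-formal point is `Q`-linearity of `φ φ^!`. Balance gives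
`φφ^!(b·m)·y = (b·φφ^!(m))·y` for all `y`. If `φ^!(y) = 0`, then `φ^!(m)·y = ± φφ^!(y)·m = 0`
and hence `⟨y, b·φφ^!(m)⟩ = ± ⟨φ^!(m)·y, b⟩ = 0`; since `ker φ^! = ker #φ` is the annihilator
of `φ(P)`, this gives `b·φφ^!(m) = φ(c)` for some `c`. Finally `⟨y, φ(c)⟩ = ± ⟨c·y, 1⟩`, so
`φ(c)` is determined by the action `c·y = φ(c)·y` on `#Q`, which is that of `φφ^!(b·m)`.
-/

lemma neg_one_zpow_add (a b : ℤ) : (-1 : ℚ) ^ (a + b) = (-1) ^ a * (-1) ^ b :=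
  zpow_add₀ (by norm_num) a b

lemma neg_one_zpow_add_one (a : ℤ) : (-1 : ℚ) ^ (a + 1) = -(-1) ^ a := by
  rw [neg_one_zpow_add, zpow_one, mul_neg_one]

lemma neg_one_zpow_mul_self (a : ℤ) : (-1 : ℚ) ^ a * (-1) ^ a = 1 := by
  rw [← neg_one_zpow_add, Even.neg_one_zpow ⟨a, rfl⟩]

lemma neg_one_zpow_congr {a b : ℤ} (h : Even (a - b)) : (-1 : ℚ) ^ a = (-1) ^ b := by
  rw [show a = b + (a - b) by ring, neg_one_zpow_add, h.neg_one_zpow, mul_one]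

namespace DirectSum.IsInternal

variable {ι R M N : Type} [DecidableEq ι] [Ring R] [AddCommGroup M] [Module R M]
  [AddCommGroup N] [Module R N] {gr : ι → Submodule R M}

theorem induction_on (h : IsInternal gr) {motive : M → Prop}
    (mem : ∀ i, ∀ x ∈ gr i, motive x) (zero : motive 0)
    (add : ∀ x y, motive x → motive y → motive (x + y)) (x : M) : motive x :=
  Submodule.iSup_induction gr (motive := motive) (h.submodule_iSup_eq_top ▸ Submodule.mem_top)
    mem zero add

theorem linearMap_ext (h : IsInternal gr) {f g : M →ₗ[R] N}
    (hfg : ∀ i, ∀ x ∈ gr i, f x = g x) : f = g :=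
  LinearMap.ext (h.induction_on hfg (by simp) fun x y hx hy => by simp [hx, hy])

theorem exists_finsupp_sum_eq (h : IsInternal gr) (x : M) :
    ∃ c : ι →₀ M, (∀ i, c i ∈ gr i) ∧ (c.sum fun _ v => v) = x :=
  (Submodule.mem_iSup_iff_exists_finsupp gr x).1 (h.submodule_iSup_eq_top ▸ Submodule.mem_top)

theorem mem_of_map_mem {grN : ι → Submodule R N} (h : IsInternal gr) (hN : IsInternal grN)
    {f : M →ₗ[R] N} (hf : ∀ i, ∀ x ∈ gr i, f x ∈ grN i) (hinj : Function.Injective f)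
    {i : ι} {x : M} (hx : f x ∈ grN i) : x ∈ gr i := by
  have hsplit : x ∈ gr i ⊔ ⨆ (j) (_ : j ≠ i), gr j := by
    rw [← iSup_split_single, h.submodule_iSup_eq_top]; trivial
  obtain ⟨y, hy, z, hz, rfl⟩ := Submodule.mem_sup.1 hsplit
  have hfz : f z ∈ grN i := by simpa using sub_mem hx (hf i y hy)
  have hle : (⨆ (j) (_ : j ≠ i), gr j) ≤ (⨆ (j) (_ : j ≠ i), grN j).comap f :=
    iSup₂_le fun j hj w hw => le_iSup₂ (f := fun j (_ : j ≠ i) => grN j) j hj (hf j w hw)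
  have hz0 : z = 0 := hinj <| by
    rw [map_zero]
    exact Submodule.disjoint_def.1 (hN.submodule_iSupIndep i) _ hfz (hle hz)
  rwa [hz0, add_zero]

end DirectSum.IsInternal

theorem DirectSum.IsInternal.linearMap_ext₂ {ι κ R M N L : Type} [DecidableEq ι]
    [DecidableEq κ] [CommRing R] [AddCommGroup M] [Module R M] [AddCommGroup N] [Module R N]
    [AddCommGroup L] [Module R L] {grM : ι → Submodule R M} {grN : κ → Submodule R N}
    (hM : DirectSum.IsInternal grM) (hN : DirectSum.IsInternal grN) {f g : M →ₗ[R] N →ₗ[R] L}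
    (hfg : ∀ i, ∀ x ∈ grM i, ∀ j, ∀ y ∈ grN j, f x y = g x y) : f = g :=
  hM.linearMap_ext fun i x hx => hN.linearMap_ext (hfg i x hx)

namespace CDGAStruct

variable {A : Type} [Ring A] [Algebra ℚ A] (SA : CDGAStruct A)

lemma grZ_natCast (i : ℕ) : SA.grZ i = SA.gr i := by
  simp [grZ]

lemma grZ_of_neg {j : ℤ} (hj : j < 0) : SA.grZ j = ⊥ := by
  simp [grZ, not_le.2 hj]

lemma mem_grZ_cases {j : ℤ} {a : A} (ha : a ∈ SA.grZ j) :
    (∃ i : ℕ, j = i ∧ a ∈ SA.gr i) ∨ a = 0 := by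
  unfold grZ at ha
  split_ifs at ha with hj
  · exact Or.inl ⟨j.toNat, by omega, ha⟩
  · exact Or.inr ((Submodule.mem_bot ℚ).1 ha)

lemma one_mem_grZ : (1 : A) ∈ SA.grZ 0 :=
  SA.grZ_natCast 0 ▸ SA.one_mem

lemma mul_mem_grZ {i j : ℤ} {a b : A} (ha : a ∈ SA.grZ i) (hb : b ∈ SA.grZ j) :
    a * b ∈ SA.grZ (i + j) := by
  obtain ⟨i, rfl, ha⟩ | rfl := SA.mem_grZ_cases ha
  · obtain ⟨j, rfl, hb⟩ | rfl := SA.mem_grZ_cases hb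
    · rw [← Nat.cast_add, grZ_natCast]; exact SA.mul_mem ha hb
    · simp
  · simp

lemma gcomm_grZ {i j : ℤ} {a b : A} (ha : a ∈ SA.grZ i) (hb : b ∈ SA.grZ j) :
    a * b = (-1 : ℚ) ^ (i * j) • (b * a) := by
  obtain ⟨i, rfl, ha⟩ | rfl := SA.mem_grZ_cases ha
  · obtain ⟨j, rfl, hb⟩ | rfl := SA.mem_grZ_cases hb
    · rw [← Nat.cast_mul, zpow_natCast]; exact SA.gcomm ha hb
    · simp
  · simp

lemma d_mem_grZ {j : ℤ} {a : A} (ha : a ∈ SA.grZ j) : SA.d a ∈ SA.grZ (j + 1) := by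
  obtain ⟨j, rfl, ha⟩ | rfl := SA.mem_grZ_cases ha
  · rw [← Nat.cast_succ, grZ_natCast]; exact SA.d_mem ha
  · simp

lemma leibniz_grZ {i : ℤ} {a : A} (b : A) (ha : a ∈ SA.grZ i) :
    SA.d (a * b) = SA.d a * b + (-1 : ℚ) ^ i • (a * SA.d b) := by
  obtain ⟨i, rfl, ha⟩ | rfl := SA.mem_grZ_cases ha
  · simpa using SA.leibniz a b ha
  · simp

lemma internal_grZ : DirectSum.IsInternal SA.grZ := by
  rw [DirectSum.isInternal_submodule_iff_iSupIndep_and_iSup_eq_top]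
  refine ⟨fun j => ?_, ?_⟩
  · rcases lt_or_ge j 0 with hj | hj
    · rw [SA.grZ_of_neg hj]; exact disjoint_bot_left
    · obtain ⟨i, rfl⟩ := Int.eq_ofNat_of_zero_le hj
      rw [SA.grZ_natCast]
      refine (SA.internal.submodule_iSupIndep i).mono_right (iSup₂_le fun k hk => ?_)
      rcases lt_or_ge k 0 with hk0 | hk0
      · rw [SA.grZ_of_neg hk0]; exact bot_le
      · obtain ⟨l, rfl⟩ := Int.eq_ofNat_of_zero_le hk0
        rw [SA.grZ_natCast]
        exact le_iSup₂ (f := fun l (_ : l ≠ i) => SA.gr l) l (by omega)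
  · rw [eq_top_iff, ← SA.internal.submodule_iSup_eq_top]
    exact iSup_le fun i => SA.grZ_natCast i ▸ le_iSup SA.grZ (i : ℤ)

end CDGAStruct

namespace DGModStruct

variable {A M : Type} [Ring A] [Algebra ℚ A] [AddCommGroup M] [Module ℚ M] {SA : CDGAStruct A}
  (SM : DGModStruct SA M)

lemma smul_mem_grZ {σ j : ℤ} {a : A} {m : M} (ha : a ∈ SA.grZ σ) (hm : m ∈ SM.gr j) :
    SM.smul a m ∈ SM.gr (σ + j) := by
  obtain ⟨σ, rfl, ha⟩ | rfl := SA.mem_grZ_cases ha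
  · exact SM.smul_mem ha hm
  · simp

lemma leibniz_grZ {σ : ℤ} {a : A} (m : M) (ha : a ∈ SA.grZ σ) :
    SM.d (SM.smul a m) = SM.smul (SA.d a) m + (-1 : ℚ) ^ σ • SM.smul a (SM.d m) := by
  obtain ⟨σ, rfl, ha⟩ | rfl := SA.mem_grZ_cases ha
  · simpa using SM.leibniz a m ha
  · simp

end DGModStruct

lemma IsCDGAHom.map_mem_grZ {A B : Type} [Ring A] [Algebra ℚ A] [Ring B] [Algebra ℚ B]
    {SA : CDGAStruct A} {SB : CDGAStruct B} {f : A →ₗ[ℚ] B} (hf : IsCDGAHom SA SB f)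
    {j : ℤ} {a : A} (ha : a ∈ SA.grZ j) : f a ∈ SB.grZ j := by
  obtain ⟨j, rfl, ha⟩ | rfl := SA.mem_grZ_cases ha
  · rw [SB.grZ_natCast]; exact hf.2.2.1 j a ha
  · simp

namespace DualRep

variable {A M D : Type} [Ring A] [Algebra ℚ A] [AddCommGroup M] [Module ℚ M]
  [AddCommGroup D] [Module ℚ D] {SA : CDGAStruct A} {SM : DGModStruct SA M} {n : ℤ}
  {SD : DGModStruct SA D} (dual : DualRep SA SM n SD)

lemma smul_pair_grZ {σ p : ℤ} {a : A} {f : D} (x : M) (ha : a ∈ SA.grZ σ) (hf : f ∈ SD.gr p) :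
    dual.pair (SD.smul a f) x = (-1 : ℚ) ^ (σ * p) * dual.pair f (SM.smul a x) := by
  obtain ⟨σ, rfl, ha⟩ | rfl := SA.mem_grZ_cases ha
  · exact dual.smul_pair a f x ha hf
  · simp

lemma pair_finsupp_sum_left (c : ℤ →₀ D) (hc : ∀ i, c i ∈ SD.gr i) {q : ℤ} {x : M}
    (hx : x ∈ SM.gr (n - q)) : dual.pair (c.sum fun _ v => v) x = dual.pair (c q) x := by
  rw [Finsupp.sum, map_sum, LinearMap.sum_apply, Finset.sum_eq_single q
    (fun b _ hb => dual.pair_deg (hc b) hx (by omega))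
    (fun hq => by simp [Finsupp.notMem_support_iff.1 hq])]

lemma pair_finsupp_sum_right (c : ℤ →₀ M) (hc : ∀ i, c i ∈ SM.gr i) {q : ℤ} {z : D}
    (hz : z ∈ SD.gr (n - q)) : dual.pair z (c.sum fun _ v => v) = dual.pair z (c q) := by
  rw [Finsupp.sum, map_sum, Finset.sum_eq_single q
    (fun b _ hb => dual.pair_deg hz (hc b) (by omega))
    (fun hq => by simp [Finsupp.notMem_support_iff.1 hq])]

theorem ext_left {z z' : D} (h : ∀ j, ∀ x ∈ SM.gr j, dual.pair z x = dual.pair z' x) :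
    z = z' := by
  obtain ⟨c, hc, hsum⟩ := SD.internal.exists_finsupp_sum_eq (z - z')
  have hc0 : c = 0 := Finsupp.ext fun q => dual.nondeg (c q) (hc q) fun x hx => by
    rw [← dual.pair_finsupp_sum_left c hc hx, hsum, map_sub, LinearMap.sub_apply, h _ x hx,
      sub_self]
  rw [← sub_eq_zero, ← hsum, hc0, Finsupp.sum_zero_index]

theorem ext_right {x x' : M} (h : ∀ j, ∀ z ∈ SD.gr j, dual.pair z x = dual.pair z x') :
    x = x' := by
  obtain ⟨c, hc, hsum⟩ := SM.internal.exists_finsupp_sum_eq (x - x')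
  have hc0 : c = 0 := Finsupp.ext fun q => by
    by_contra hne
    obtain ⟨l, hl⟩ : ∃ l : Module.Dual ℚ M, l (c q) ≠ 0 := by
      by_contra! hall
      exact hne ((Module.forall_dual_apply_eq_zero_iff ℚ (c q)).1 hall)
    obtain ⟨z, hz, hzl⟩ := dual.surj (n - q) l
    have hpair := dual.pair_finsupp_sum_right c hc hz
    rw [hsum, map_sub, h _ z hz, sub_self, hzl _ (by simpa using hc q)] at hpair
    exact hl hpair.symm
  rw [← sub_eq_zero, ← hsum, hc0, Finsupp.sum_zero_index]

theorem mem_gr_of_pair_eq_zero {p : ℤ} {z : D}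
    (h : ∀ j, j ≠ n - p → ∀ x ∈ SM.gr j, dual.pair z x = 0) : z ∈ SD.gr p := by
  obtain ⟨c, hc, hsum⟩ := SD.internal.exists_finsupp_sum_eq z
  have hc0 : ∀ q, q ≠ p → c q = 0 := fun q hq => dual.nondeg (c q) (hc q) fun x hx => by
    rw [← dual.pair_finsupp_sum_left c hc hx, hsum]
    exact h _ (by omega) x hx
  rw [← hsum, Finsupp.sum, Finset.sum_eq_single p (fun q _ hq => hc0 q hq)
    (fun hp => Finsupp.notMem_support_iff.1 hp)]
  exact hc p

theorem mem_of_forall_pair_eq_zero {k : ℤ} {W : Submodule ℚ M} (hW : W ≤ SM.gr k) {x : M}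
    (hx : x ∈ SM.gr k)
    (h : ∀ y ∈ SD.gr (n - k), (∀ w ∈ W, dual.pair y w = 0) → dual.pair y x = 0) :
    x ∈ W := by
  by_contra hxW
  obtain ⟨l, hlx, hlW⟩ := W.exists_dual_map_eq_bot_of_notMem hxW inferInstance
  obtain ⟨y, hy, hyl⟩ := dual.surj (n - k) l
  have hgr : ∀ w ∈ SM.gr k, dual.pair y w = l w := fun w hw => hyl w (by simpa using hw)
  refine hlx ((hgr x hx).symm.trans (h y hy fun w hw => ?_))
  rw [hgr w (hW hw), ← Submodule.mem_bot ℚ, ← hlW]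
  exact Submodule.mem_map_of_mem hw

end DualRep

section DGModHom

variable {A : Type} [Ring A] [Algebra ℚ A] {SA : CDGAStruct A}
  {M N L : Type} [AddCommGroup M] [Module ℚ M] [AddCommGroup N] [Module ℚ N]
  [AddCommGroup L] [Module ℚ L] {SM : DGModStruct SA M} {SN : DGModStruct SA N}
  {SL : DGModStruct SA L}

theorem IsCDGAHom.isDGModHom {B : Type} [Ring B] [Algebra ℚ B] {SB : CDGAStruct B}
    {φ : A →ₗ[ℚ] B} (hφ : IsCDGAHom SA SB φ) {SAm : DGModStruct SA A} (hA : IsSelfMod SA SAm)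
    {SBm : DGModStruct SB B} (hB : IsSelfMod SB SBm) {SBA : DGModStruct SA B}
    (hBA : IsModViaHom SA SB φ SBm SBA) : IsDGModHom SAm SBA φ := by
  refine ⟨fun j a ha => ?_, fun a a' => ?_, fun a => ?_⟩
  · rw [hBA.1, hB.1]; exact hφ.map_mem_grZ (hA.1 j ▸ ha)
  · rw [hA.2.1, hφ.2.1, hBA.2.1, hB.2.1]
  · rw [hA.2.2, hφ.2.2.2, hBA.2.2, hB.2.2]

theorem IsDGModHom.of_comp_injective {θ : M →ₗ[ℚ] N} (hθ : IsDGModHom SM SN θ)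
    (hinj : Function.Injective θ) {g : L →ₗ[ℚ] M} (hθg : IsDGModHom SL SN (θ ∘ₗ g)) :
    IsDGModHom SL SM g :=
  ⟨fun j x hx => SM.internal.mem_of_map_mem SN.internal hθ.1 hinj (hθg.1 j x hx),
    fun a x => hinj (by rw [hθ.2.1]; exact hθg.2.1 a x),
    fun x => hinj (by rw [hθ.2.2]; exact hθg.2.2 x)⟩

theorem IsDGModHom.isDGHomToAlg {SAm : DGModStruct SA A} (hA : IsSelfMod SA SAm)
    {g : M →ₗ[ℚ] A} (hg : IsDGModHom SM SAm g) : IsDGHomToAlg SA SM g :=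
  ⟨fun j m hm => hA.1 j ▸ hg.1 j m hm, fun a m => by rw [hg.2.1, hA.2.1],
    fun m => by rw [hg.2.2, hA.2.2]⟩

end DGModHom

namespace DualRep

variable {A : Type} [Ring A] [Algebra ℚ A] {SA : CDGAStruct A} {n : ℤ}
  {M N D E : Type} [AddCommGroup M] [Module ℚ M] [AddCommGroup N] [Module ℚ N]
  [AddCommGroup D] [Module ℚ D] [AddCommGroup E] [Module ℚ E]
  {SM : DGModStruct SA M} {SN : DGModStruct SA N} {SD : DGModStruct SA D}
  {SE : DGModStruct SA E} (dualM : DualRep SA SM n SD) (dualN : DualRep SA SN n SE)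
  {f : M →ₗ[ℚ] N} {g : E →ₗ[ℚ] D}

theorem transpose_eq_zero (hf : ∀ j, ∀ p ∈ SM.gr j, f p ∈ SN.gr j)
    (hg : ∀ x p, dualM.pair (g x) p = dualN.pair x (f p)) {s : ℤ} {y : E} (hy : y ∈ SE.gr s)
    (h : ∀ p ∈ SM.gr (n - s), dualN.pair y (f p) = 0) : g y = 0 :=
  dualM.ext_left fun j p hp => by
    rw [hg, map_zero, LinearMap.zero_apply]
    by_cases hj : j = n - s
    · exact h p (hj ▸ hp)
    · exact dualN.pair_deg hy (hf j p hp) (by omega)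

theorem isDGModHom_transpose (hf : IsDGModHom SM SN f)
    (hg : ∀ x p, dualM.pair (g x) p = dualN.pair x (f p)) : IsDGModHom SE SD g := by
  have hgr : ∀ s, ∀ x ∈ SE.gr s, g x ∈ SD.gr s := fun s x hx =>
    dualM.mem_gr_of_pair_eq_zero fun j hj p hp => by
      rw [hg]; exact dualN.pair_deg hx (hf.1 j p hp) (by omega)
  have hsmul : SE.smul.compr₂ g = SD.smul.compl₂ g :=
    SA.internal_grZ.linearMap_ext₂ SE.internal fun σ a ha s x hx =>
      dualM.ext_left fun j p hp => by
        simp only [LinearMap.compr₂_apply, LinearMap.compl₂_apply]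
        rw [hg, dualN.smul_pair_grZ _ ha hx, ← hf.2.1, ← hg,
          dualM.smul_pair_grZ _ ha (hgr s x hx)]
  have hd : g ∘ₗ SE.d = SD.d ∘ₗ g := SE.internal.linearMap_ext fun s x hx =>
    dualM.ext_left fun j p hp => by
      simp only [LinearMap.comp_apply]
      rw [hg, dualN.d_pair x _ hx, ← hf.2.2, ← hg, dualM.d_pair _ p (hgr s x hx)]
  exact ⟨hgr, LinearMap.congr_fun₂ hsmul, LinearMap.congr_fun hd⟩

end DualRep

section Cone

variable {A M : Type} [Ring A] [Algebra ℚ A] [AddCommGroup M] [Module ℚ M]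
  {SA : CDGAStruct A} {SM : DGModStruct SA M} {μ : A × M →ₗ[ℚ] A × M →ₗ[ℚ] A × M}

namespace SemiTrivialMul

theorem left_left (hμ : SemiTrivialMul SA SM μ) (a a' : A) : μ (a, 0) (a', 0) = (a * a', 0) :=
  hμ.1 a a'

theorem left_right (hμ : SemiTrivialMul SA SM μ) {σ : ℤ} {a : A} (ha : a ∈ SA.grZ σ) (m : M) :
    μ (a, 0) (0, m) = (-1 : ℚ) ^ σ • (0, SM.smul a m) := by
  obtain ⟨σ, rfl, ha⟩ | rfl := SA.mem_grZ_cases ha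
  · simpa using hμ.2.1 σ a m ha
  · rw [Prod.mk_zero_zero, map_zero]; simp [Prod.mk_zero_zero]

theorem right_left (hμ : SemiTrivialMul SA SM μ) {σ τ : ℤ} {a : A} {m : M}
    (ha : a ∈ SA.grZ σ) (hm : m ∈ SM.gr τ) :
    μ (0, m) (a, 0) = (-1 : ℚ) ^ (τ * σ) • (0, SM.smul a m) := by
  obtain ⟨σ, rfl, ha⟩ | rfl := SA.mem_grZ_cases ha
  · simpa using hμ.2.2.1 σ τ a m ha hm
  · rw [Prod.mk_zero_zero, map_zero]; simp [Prod.mk_zero_zero]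

theorem right_right (hμ : SemiTrivialMul SA SM μ) (m m' : M) : μ (0, m) (0, m') = 0 :=
  hμ.2.2.2 m m'

end SemiTrivialMul

variable (SA SM)

def IsConePure (i : ℤ) (x : A × M) : Prop :=
  (∃ a ∈ SA.grZ i, (a, 0) = x) ∨ ∃ m ∈ SM.gr (i + 1), (0, m) = x

theorem exists_isConePure_add {i : ℤ} {x : A × M} (hx : x ∈ coneGr SA SM i) :
    ∃ y z, IsConePure SA SM i y ∧ IsConePure SA SM i z ∧ x = y + z :=
  ⟨(x.1, 0), (0, x.2), Or.inl ⟨x.1, hx.1, rfl⟩, Or.inr ⟨x.2, hx.2, rfl⟩, by simp⟩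

theorem IsConePure.mem_coneGr {i : ℤ} {x : A × M} (hx : IsConePure SA SM i x) :
    x ∈ coneGr SA SM i := by
  rcases hx with ⟨a, ha, rfl⟩ | ⟨m, hm, rfl⟩
  · exact ⟨ha, Submodule.zero_mem _⟩
  · exact ⟨Submodule.zero_mem _, hm⟩

theorem cone_ext {N : Type} [AddCommGroup N] [Module ℚ N] {f g : A × M →ₗ[ℚ] N}
    (h : ∀ i x, IsConePure SA SM i x → f x = g x) : f = g :=
  LinearMap.prod_ext (SA.internal_grZ.linearMap_ext fun i a ha => h i _ (Or.inl ⟨a, ha, rfl⟩))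
    (SM.internal.linearMap_ext fun τ m hm =>
      h (τ - 1) _ (Or.inr ⟨m, by rwa [sub_add_cancel], rfl⟩))

theorem cone_ext₃ {N : Type} [AddCommGroup N] [Module ℚ N]
    {f g : A × M →ₗ[ℚ] A × M →ₗ[ℚ] A × M →ₗ[ℚ] N}
    (h : ∀ i x j y k z, IsConePure SA SM i x → IsConePure SA SM j y →
      IsConePure SA SM k z → f x y z = g x y z) : f = g :=
  cone_ext SA SM fun i x hx => cone_ext SA SM fun j y hy => cone_ext SA SM fun k z hz =>
    h i x j y k z hx hy hz

theorem coneGr_isInternal : DirectSum.IsInternal (coneGr SA SM) := by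
  rw [DirectSum.isInternal_submodule_iff_iSupIndep_and_iSup_eq_top]
  refine ⟨fun p => Submodule.disjoint_def.2 fun x hx hx' => ?_, ?_⟩
  · have hle : (⨆ (q) (_ : q ≠ p), coneGr SA SM q) ≤
        (⨆ (q) (_ : q ≠ p), SA.grZ q).prod (⨆ (r) (_ : r ≠ p + 1), SM.gr r) :=
      iSup₂_le fun q hq => Submodule.prod_mono
        (le_iSup₂ (f := fun q (_ : q ≠ p) => SA.grZ q) q hq)
        (le_iSup₂ (f := fun r (_ : r ≠ p + 1) => SM.gr r) (q + 1) (by omega))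
    obtain ⟨h1, h2⟩ := hle hx'
    exact Prod.ext (Submodule.disjoint_def.1 (SA.internal_grZ.submodule_iSupIndep p) _ hx.1 h1)
      (Submodule.disjoint_def.1 (SM.internal.submodule_iSupIndep (p + 1)) _ hx.2 h2)
  · have hpure : ∀ i y, IsConePure SA SM i y → y ∈ ⨆ q, coneGr SA SM q := fun i _ hy =>
      Submodule.mem_iSup_of_mem i (hy.mem_coneGr SA SM)
    have hl : ∀ a : A, ((a, 0) : A × M) ∈ ⨆ q, coneGr SA SM q :=
      SA.internal_grZ.induction_on (fun i a ha => hpure i _ (Or.inl ⟨a, ha, rfl⟩))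
        (Submodule.zero_mem _) fun a b ha hb => by simpa using add_mem ha hb
    have hr : ∀ m : M, ((0, m) : A × M) ∈ ⨆ q, coneGr SA SM q :=
      SM.internal.induction_on
        (fun τ m hm => hpure (τ - 1) _ (Or.inr ⟨m, by rwa [sub_add_cancel], rfl⟩))
        (Submodule.zero_mem _) fun m m' hm hm' => by simpa using add_mem hm hm'
    exact eq_top_iff.2 fun x _ => by simpa using add_mem (hl x.1) (hr x.2)

theorem cone_one_mul (hμ : SemiTrivialMul SA SM μ) (x : A × M) : μ (1, 0) x = x :=
  LinearMap.congr_fun (cone_ext SA SM (f := μ (1, 0)) (g := LinearMap.id) fun i x hx => by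
    rcases hx with ⟨a, ha, rfl⟩ | ⟨m, hm, rfl⟩
    · simp [hμ.left_left]
    · simp [hμ.left_right SA.one_mem_grZ, SM.one_smul]) x

theorem cone_mul_one (hμ : SemiTrivialMul SA SM μ) (x : A × M) : μ x (1, 0) = x :=
  LinearMap.congr_fun (cone_ext SA SM (f := μ.flip (1, 0)) (g := LinearMap.id) fun i x hx => by
    rcases hx with ⟨a, ha, rfl⟩ | ⟨m, hm, rfl⟩
    · simp [hμ.left_left]
    · simp [hμ.right_left SA.one_mem_grZ hm, SM.one_smul]) x

theorem cone_mul_assoc (hμ : SemiTrivialMul SA SM μ) (x y z : A × M) :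
    μ (μ x y) z = μ x (μ y z) := by
  suffices h : μ.compr₂ μ = (LinearMap.llcomp ℚ _ _ _ ∘ₗ μ).compl₂ μ by
    simpa using LinearMap.congr_fun (LinearMap.congr_fun₂ h x y) z
  refine cone_ext₃ SA SM ?_
  rintro i _ j _ k _ (⟨a, ha, rfl⟩ | ⟨m, hm, rfl⟩) (⟨b, hb, rfl⟩ | ⟨p, hp, rfl⟩)
    (⟨c, hc, rfl⟩ | ⟨q, hq, rfl⟩) <;>
    simp only [LinearMap.compr₂_apply, LinearMap.compl₂_apply, LinearMap.comp_apply,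
      LinearMap.llcomp_apply]
  · simp [hμ.left_left, mul_assoc]
  · rw [hμ.left_left, hμ.left_right (SA.mul_mem_grZ ha hb), hμ.left_right hb, map_smul,
      hμ.left_right ha, smul_smul, SM.mul_smul, ← neg_one_zpow_add, add_comm]
  · rw [hμ.left_right ha, map_smul, LinearMap.smul_apply,
      hμ.right_left hc (SM.smul_mem_grZ ha hp), hμ.right_left hc hp, map_smul, hμ.left_right ha,
      ← SM.mul_smul, SA.gcomm_grZ hc ha, map_smul, LinearMap.smul_apply, ← SM.mul_smul]
    simp only [Prod.smul_mk, smul_zero, smul_smul, ← neg_one_zpow_add]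
    congr 2
    exact neg_one_zpow_congr (by simp only [parity_simps]; tauto)
  · simp [hμ.left_right ha, hμ.right_right]
  · rw [hμ.right_left hb hm, map_smul, LinearMap.smul_apply,
      hμ.right_left hc (SM.smul_mem_grZ hb hm), hμ.left_left,
      hμ.right_left (SA.mul_mem_grZ hb hc) hm, ← SM.mul_smul, SA.gcomm_grZ hc hb,
      map_smul, LinearMap.smul_apply]
    simp only [Prod.smul_mk, smul_zero, smul_smul, ← neg_one_zpow_add]
    congr 2
    exact neg_one_zpow_congr (by simp only [parity_simps]; tauto)
  · simp [hμ.right_left hb hm, hμ.left_right hb, hμ.right_right]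
  · simp [hμ.right_right, hμ.right_left hc hp]
  · simp [hμ.right_right]

theorem cone_mul_mem_of_isConePure (hμ : SemiTrivialMul SA SM μ) {i j : ℤ} {x y : A × M}
    (hx : IsConePure SA SM i x) (hy : IsConePure SA SM j y) :
    μ x y ∈ coneGr SA SM (i + j) := by
  rcases hx with ⟨a, ha, rfl⟩ | ⟨m, hm, rfl⟩ <;> rcases hy with ⟨b, hb, rfl⟩ | ⟨q, hq, rfl⟩
  · rw [hμ.left_left]; exact ⟨SA.mul_mem_grZ ha hb, Submodule.zero_mem _⟩
  · rw [hμ.left_right ha]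
    exact Submodule.smul_mem _ _
      ⟨Submodule.zero_mem _, by simpa [add_assoc] using SM.smul_mem_grZ ha hq⟩
  · rw [hμ.right_left hb hm]
    exact Submodule.smul_mem _ _ ⟨Submodule.zero_mem _, by
      simpa [add_comm, add_left_comm, add_assoc] using SM.smul_mem_grZ hb hm⟩
  · rw [hμ.right_right]; exact Submodule.zero_mem _

theorem cone_mul_mem (hμ : SemiTrivialMul SA SM μ) {i j : ℤ} {x y : A × M}
    (hx : x ∈ coneGr SA SM i) (hy : y ∈ coneGr SA SM j) : μ x y ∈ coneGr SA SM (i + j) := by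
  obtain ⟨x₁, x₂, hx₁, hx₂, rfl⟩ := exists_isConePure_add SA SM hx
  obtain ⟨y₁, y₂, hy₁, hy₂, rfl⟩ := exists_isConePure_add SA SM hy
  simp only [map_add, LinearMap.add_apply]
  exact add_mem (add_mem (cone_mul_mem_of_isConePure SA SM hμ hx₁ hy₁)
      (cone_mul_mem_of_isConePure SA SM hμ hx₂ hy₁))
    (add_mem (cone_mul_mem_of_isConePure SA SM hμ hx₁ hy₂)
      (cone_mul_mem_of_isConePure SA SM hμ hx₂ hy₂))

theorem cone_mul_comm_of_isConePure (hμ : SemiTrivialMul SA SM μ) {i j : ℤ} {x y : A × M}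
    (hx : IsConePure SA SM i x) (hy : IsConePure SA SM j y) :
    μ x y = (-1 : ℚ) ^ (i * j) • μ y x := by
  rcases hx with ⟨a, ha, rfl⟩ | ⟨m, hm, rfl⟩ <;> rcases hy with ⟨b, hb, rfl⟩ | ⟨q, hq, rfl⟩
  · simp [hμ.left_left, SA.gcomm_grZ ha hb]
  · rw [hμ.left_right ha, hμ.right_left ha hq, smul_smul, ← neg_one_zpow_add]
    exact congrArg (· • _) (neg_one_zpow_congr (by simp only [parity_simps]; tauto))
  · rw [hμ.left_right hb, hμ.right_left hb hm, smul_smul, ← neg_one_zpow_add]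
    exact congrArg (· • _) (neg_one_zpow_congr (by simp only [parity_simps]; tauto))
  · simp [hμ.right_right]

theorem cone_mul_comm (hμ : SemiTrivialMul SA SM μ) {i j : ℤ} {x y : A × M}
    (hx : x ∈ coneGr SA SM i) (hy : y ∈ coneGr SA SM j) :
    μ x y = (-1 : ℚ) ^ (i * j) • μ y x := by
  obtain ⟨x₁, x₂, hx₁, hx₂, rfl⟩ := exists_isConePure_add SA SM hx
  obtain ⟨y₁, y₂, hy₁, hy₂, rfl⟩ := exists_isConePure_add SA SM hy
  simp only [map_add, LinearMap.add_apply, smul_add]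
  rw [cone_mul_comm_of_isConePure SA SM hμ hx₁ hy₁, cone_mul_comm_of_isConePure SA SM hμ hx₁ hy₂,
    cone_mul_comm_of_isConePure SA SM hμ hx₂ hy₁, cone_mul_comm_of_isConePure SA SM hμ hx₂ hy₂]
  abel

lemma coneD_mk (g : M →ₗ[ℚ] A) (a : A) (m : M) :
    coneD SA SM g (a, m) = (SA.d a + g m, 0) - (0, SM.d m) := by
  simp [coneD]

theorem coneD_mem {g : M →ₗ[ℚ] A} (hg : IsDGHomToAlg SA SM g) {j : ℤ} {x : A × M}
    (hx : x ∈ coneGr SA SM j) : coneD SA SM g x ∈ coneGr SA SM (j + 1) :=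
  ⟨add_mem (SA.d_mem_grZ hx.1) (hg.1 _ _ hx.2), neg_mem (SM.d_mem hx.2)⟩

theorem coneD_coneD {g : M →ₗ[ℚ] A} (hg : IsDGHomToAlg SA SM g) (x : A × M) :
    coneD SA SM g (coneD SA SM g x) = 0 := by
  simp [coneD, hg.2.2, SA.d_sq, SM.d_sq]

theorem coneD_mul_of_isConePure (hμ : SemiTrivialMul SA SM μ) {g : M →ₗ[ℚ] A}
    (hg : IsDGHomToAlg SA SM g) (hbal : IsBalanced SA SM g) {i : ℤ} {x : A × M}
    (hx : IsConePure SA SM i x) (y : A × M) :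
    coneD SA SM g (μ x y) = μ (coneD SA SM g x) y + (-1 : ℚ) ^ i • μ x (coneD SA SM g y) := by
  refine LinearMap.congr_fun (cone_ext SA SM (f := coneD SA SM g ∘ₗ μ x)
    (g := μ (coneD SA SM g x) + (-1 : ℚ) ^ i • (μ x ∘ₗ coneD SA SM g)) fun j y hy => ?_) y
  simp only [LinearMap.comp_apply, LinearMap.add_apply, LinearMap.smul_apply]
  rcases hx with ⟨a, ha, rfl⟩ | ⟨m, hm, rfl⟩ <;> rcases hy with ⟨b, hb, rfl⟩ | ⟨q, hq, rfl⟩ <;>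
    simp only [coneD_mk, map_sub, map_zero, LinearMap.sub_apply, add_zero, zero_add,
      Prod.mk_zero_zero, sub_zero, hμ.left_left, hμ.right_right]
  · rw [SA.leibniz_grZ b ha]; simp
  · rw [hμ.left_right ha, hμ.left_right ha, hμ.left_right (SA.d_mem_grZ ha), map_smul,
      coneD_mk, hg.2.1, SM.leibniz_grZ q ha, neg_one_zpow_add_one]
    ext <;> simp
    module
  · have hs₁ : (-1 : ℚ) ^ ((i + 1 + 1) * j) = (-1) ^ ((i + 1) * j) * (-1) ^ j := by
      rw [← neg_one_zpow_add]; congr 1; ring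
    have hs₂ : (-1 : ℚ) ^ i * (-1) ^ ((i + 1) * (j + 1)) = -(-1) ^ ((i + 1) * j) := by
      rw [← neg_one_zpow_add, ← neg_one_zpow_add_one]
      exact neg_one_zpow_congr (by simp only [parity_simps]; tauto)
    rw [hμ.right_left hb hm, hμ.right_left hb (SM.d_mem hm),
      hμ.right_left (SA.d_mem_grZ hb) hm, map_smul, coneD_mk, hg.2.1, SM.leibniz_grZ m hb,
      SA.gcomm_grZ (hg.1 _ _ hm) hb, smul_smul, hs₁, hs₂]
    ext <;> simp
    module
  · rw [hμ.right_left (hg.1 _ _ hq) hm, hμ.left_right (hg.1 _ _ hm), hbal _ _ _ _ hm hq,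
      neg_one_zpow_add_one]
    ext <;> simp

theorem coneD_mul (hμ : SemiTrivialMul SA SM μ) {g : M →ₗ[ℚ] A} (hg : IsDGHomToAlg SA SM g)
    (hbal : IsBalanced SA SM g) {i : ℤ} {x : A × M} (hx : x ∈ coneGr SA SM i) (y : A × M) :
    coneD SA SM g (μ x y) = μ (coneD SA SM g x) y + (-1 : ℚ) ^ i • μ x (coneD SA SM g y) := by
  obtain ⟨x₁, x₂, hx₁, hx₂, rfl⟩ := exists_isConePure_add SA SM hx
  simp only [map_add, LinearMap.add_apply, smul_add,
    coneD_mul_of_isConePure SA SM hμ hg hbal hx₁, coneD_mul_of_isConePure SA SM hμ hg hbal hx₂]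
  abel

theorem cone_isGCDGA (hμ : SemiTrivialMul SA SM μ) {g : M →ₗ[ℚ] A} (hg : IsDGHomToAlg SA SM g)
    (hbal : IsBalanced SA SM g) : IsGCDGA (coneGr SA SM) ((1 : A), (0 : M)) μ (coneD SA SM g) :=
  ⟨coneGr_isInternal SA SM, ⟨SA.one_mem_grZ, Submodule.zero_mem _⟩, cone_one_mul SA SM hμ,
    cone_mul_one SA SM hμ, cone_mul_assoc SA SM hμ, fun _ _ _ _ => cone_mul_mem SA SM hμ,
    fun _ _ _ _ => cone_mul_comm SA SM hμ, fun _ _ => coneD_mem SA SM hg, coneD_coneD SA SM hg,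
    fun _ _ y hx => coneD_mul SA SM hμ hg hbal hx y⟩

end Cone

theorem cone_prodMap_isGradedDGAHom {A B M : Type} [Ring A] [Algebra ℚ A] [Ring B]
    [Algebra ℚ B] [AddCommGroup M] [Module ℚ M] {SA : CDGAStruct A} {SB : CDGAStruct B}
    {φ : A →ₗ[ℚ] B} (hφ : IsCDGAHom SA SB φ) {SMA : DGModStruct SA M} {SMB : DGModStruct SB M}
    (hM : IsModViaHom SA SB φ SMB SMA) (g : M →ₗ[ℚ] A)
    {μA : A × M →ₗ[ℚ] A × M →ₗ[ℚ] A × M} (hμA : SemiTrivialMul SA SMA μA)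
    {μB : B × M →ₗ[ℚ] B × M →ₗ[ℚ] B × M} (hμB : SemiTrivialMul SB SMB μB) :
    IsGradedDGAHom (coneGr SA SMA) ((1 : A), (0 : M)) μA (coneD SA SMA g)
      (coneGr SB SMB) ((1 : B), (0 : M)) μB (coneD SB SMB (φ ∘ₗ g))
      (φ.prodMap LinearMap.id) := by
  have hmul : μA.compr₂ (φ.prodMap LinearMap.id) =
      μB.compl₁₂ (φ.prodMap LinearMap.id) (φ.prodMap LinearMap.id) :=
    cone_ext SA SMA fun i x hx => cone_ext SA SMA fun j y hy => by
      simp only [LinearMap.compr₂_apply, LinearMap.compl₁₂_apply]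
      rcases hx with ⟨a, ha, rfl⟩ | ⟨m, hm, rfl⟩ <;>
        rcases hy with ⟨b, hb, rfl⟩ | ⟨q, hq, rfl⟩
      · simp [hμA.left_left, hμB.left_left, hφ.2.1]
      · simp [hμA.left_right ha, hμB.left_right (hφ.map_mem_grZ ha), hM.2.1]
      · simp [hμA.right_left hb hm, hμB.right_left (hφ.map_mem_grZ hb) (hM.1 _ ▸ hm), hM.2.1]
      · simp [hμA.right_right, hμB.right_right]
  refine ⟨by simp [hφ.1], LinearMap.congr_fun₂ hmul, fun j x hx => ?_, fun x => ?_⟩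
  · exact ⟨hφ.map_mem_grZ hx.1, hM.1 _ ▸ hx.2⟩
  · simp [coneD, hφ.2.2.2, hM.2.2]

theorem IsBalanced.of_comp {A B M : Type} [Ring A] [Algebra ℚ A] [Ring B] [Algebra ℚ B]
    [AddCommGroup M] [Module ℚ M] {SA : CDGAStruct A} {SB : CDGAStruct B} {φ : A →ₗ[ℚ] B}
    {SMA : DGModStruct SA M} {SMB : DGModStruct SB M} (hM : IsModViaHom SA SB φ SMB SMA)
    {g : M →ₗ[ℚ] A} (hbal : IsBalanced SB SMB (φ ∘ₗ g)) : IsBalanced SA SMA g :=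
  fun i j x y hx hy => by
    rw [hM.2.1, hM.2.1]
    exact hbal i j x y (hM.1 i ▸ hx) (hM.1 j ▸ hy)

theorem IsBalanced.smul_map_smul {A M : Type} [Ring A] [Algebra ℚ A] [AddCommGroup M]
    [Module ℚ M] {SA : CDGAStruct A} {SM : DGModStruct SA M} {f : M →ₗ[ℚ] A}
    (hbal : IsBalanced SA SM f) (hf : ∀ j, ∀ m ∈ SM.gr j, f m ∈ SA.grZ j) {β s t : ℤ} {b : A}
    {m y : M} (hb : b ∈ SA.grZ β) (hm : m ∈ SM.gr s) (hy : y ∈ SM.gr t) :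
    SM.smul (f (SM.smul b m)) y = SM.smul (b * f m) y := by
  rw [hbal _ _ _ _ (SM.smul_mem_grZ hb hm) hy, ← SM.mul_smul, SA.gcomm_grZ (hf _ _ hy) hb,
    map_smul, LinearMap.smul_apply, SM.mul_smul, hbal _ _ _ _ hy hm, map_smul, SM.mul_smul,
    smul_smul, smul_smul, ← neg_one_zpow_add, ← neg_one_zpow_add,
    Even.neg_one_zpow (by simp only [parity_simps]; tauto), one_smul]

section Shriek

variable {P Q DQ : Type} [Ring P] [Algebra ℚ P] [Ring Q] [Algebra ℚ Q] [AddCommGroup DQ]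
  [Module ℚ DQ] {SP : CDGAStruct P} {SQ : CDGAStruct Q} {n : ℤ} {φ : P →ₗ[ℚ] Q}
  {SQself : DGModStruct SQ Q} {SQP : DGModStruct SP Q} {SDQ : DGModStruct SP DQ}
  {SDQQ : DGModStruct SQ DQ} {sh : DQ →ₗ[ℚ] P}

theorem DualRep.pair_map_eq (dualQ : DualRep SP SQP n SDQ) (hQself : IsSelfMod SQ SQself)
    (hQP : IsModViaHom SP SQ φ SQself SQP) {σ t : ℤ} {a : P} {y : DQ} (ha : a ∈ SP.grZ σ)
    (hy : y ∈ SDQ.gr t) :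
    dualQ.pair y (φ a) = (-1 : ℚ) ^ (σ * t) * dualQ.pair (SDQ.smul a y) 1 := by
  rw [dualQ.smul_pair_grZ 1 ha hy, hQP.2.1, hQself.2.1, mul_one, ← mul_assoc,
    neg_one_zpow_mul_self, one_mul]

theorem mul_map_shriek_mem_map (dualQ : DualRep SP SQP n SDQ) (hφ : IsCDGAHom SP SQ φ)
    (hQself : IsSelfMod SQ SQself) (hQP : IsModViaHom SP SQ φ SQself SQP)
    (hDQ : IsModViaHom SP SQ φ SDQQ SDQ) (hsh : ∀ j, ∀ m ∈ SDQ.gr j, sh m ∈ SP.grZ j)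
    (hbal : IsBalanced SQ SDQQ (φ ∘ₗ sh))
    (hker : ∀ s, ∀ y ∈ SDQ.gr s, (∀ p ∈ SP.grZ (n - s), dualQ.pair y (φ p) = 0) → sh y = 0)
    {β s : ℤ} {b : Q} {m : DQ} (hb : b ∈ SQ.grZ β) (hm : m ∈ SDQ.gr s) :
    b * φ (sh m) ∈ (SP.grZ (β + s)).map φ := by
  have hQPgr : ∀ j, SQP.gr j = SQ.grZ j := fun j => (hQP.1 j).trans (hQself.1 j)
  have hφsh : φ (sh m) ∈ SQ.grZ s := hφ.map_mem_grZ (hsh s m hm)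
  refine dualQ.mem_of_forall_pair_eq_zero ?_ (hQPgr _ ▸ SQ.mul_mem_grZ hb hφsh)
    fun y hy hyW => ?_
  · rintro _ ⟨p, hp, rfl⟩
    exact hQPgr _ ▸ hφ.map_mem_grZ hp
  have hy0 : sh y = 0 := hker _ y hy fun p hp => hyW _ ⟨p, by rwa [sub_sub_cancel] at hp, rfl⟩
  have hact : SDQ.smul (sh m) y = 0 := by
    rw [hDQ.2.1, ← LinearMap.comp_apply φ sh, hbal _ _ m y (hDQ.1 s ▸ hm) (hDQ.1 _ ▸ hy),
      LinearMap.comp_apply, hy0, map_zero, map_zero, LinearMap.zero_apply, smul_zero]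
  have h := dualQ.smul_pair_grZ b (hsh s m hm) hy
  rw [hact, map_zero, LinearMap.zero_apply, hQP.2.1, hQself.2.1] at h
  rw [SQ.gcomm_grZ hb hφsh, map_smul, smul_eq_mul,
    (mul_eq_zero.1 h.symm).resolve_left (zpow_ne_zero _ (by norm_num)), mul_zero]

theorem map_shriek_smul_of_mem (dualQ : DualRep SP SQP n SDQ) (hφ : IsCDGAHom SP SQ φ)
    (hQself : IsSelfMod SQ SQself) (hQP : IsModViaHom SP SQ φ SQself SQP)
    (hDQ : IsModViaHom SP SQ φ SDQQ SDQ) (hsh : ∀ j, ∀ m ∈ SDQ.gr j, sh m ∈ SP.grZ j)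
    (hbal : IsBalanced SQ SDQQ (φ ∘ₗ sh))
    (hker : ∀ s, ∀ y ∈ SDQ.gr s, (∀ p ∈ SP.grZ (n - s), dualQ.pair y (φ p) = 0) → sh y = 0)
    {β s : ℤ} {b : Q} {m : DQ} (hb : b ∈ SQ.grZ β) (hm : m ∈ SDQ.gr s) :
    φ (sh (SDQQ.smul b m)) = b * φ (sh m) := by
  obtain ⟨c, hc, hcb⟩ := mul_map_shriek_mem_map dualQ hφ hQself hQP hDQ hsh hbal hker hb hm
  have hbm : SDQQ.smul b m ∈ SDQ.gr (β + s) := hDQ.1 _ ▸ SDQQ.smul_mem_grZ hb (hDQ.1 s ▸ hm)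
  have hact : ∀ t, ∀ y ∈ SDQ.gr t, SDQ.smul (sh (SDQQ.smul b m)) y = SDQ.smul c y :=
    fun t y hy => by
      rw [hDQ.2.1, hDQ.2.1, hcb]
      exact hbal.smul_map_smul (fun j m hm => hφ.map_mem_grZ (hsh j m (hDQ.1 j ▸ hm))) hb
        (hDQ.1 s ▸ hm) (hDQ.1 t ▸ hy)
  rw [← hcb]
  exact dualQ.ext_right fun t y hy => by
    rw [dualQ.pair_map_eq hQself hQP (hsh _ _ hbm) hy, dualQ.pair_map_eq hQself hQP hc hy,
      hact t y hy]

theorem isDGHomToAlg_comp_shriek (dualQ : DualRep SP SQP n SDQ) (hφ : IsCDGAHom SP SQ φ)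
    (hQself : IsSelfMod SQ SQself) (hQP : IsModViaHom SP SQ φ SQself SQP)
    (hDQ : IsModViaHom SP SQ φ SDQQ SDQ) (hsh : IsDGHomToAlg SP SDQ sh)
    (hbal : IsBalanced SQ SDQQ (φ ∘ₗ sh))
    (hker : ∀ s, ∀ y ∈ SDQ.gr s, (∀ p ∈ SP.grZ (n - s), dualQ.pair y (φ p) = 0) → sh y = 0) :
    IsDGHomToAlg SQ SDQQ (φ ∘ₗ sh) := by
  have hsmul : SDQQ.smul.compr₂ (φ ∘ₗ sh) = (LinearMap.mul ℚ Q).compl₂ (φ ∘ₗ sh) :=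
    SQ.internal_grZ.linearMap_ext₂ SDQ.internal fun _ _ hb _ _ hm =>
      map_shriek_smul_of_mem dualQ hφ hQself hQP hDQ hsh.1 hbal hker hb hm
  refine ⟨fun j m hm => hφ.map_mem_grZ (hsh.1 j m (hDQ.1 j ▸ hm)), LinearMap.congr_fun₂ hsmul,
    fun m => ?_⟩
  rw [LinearMap.comp_apply, LinearMap.comp_apply, ← hDQ.2.2, hsh.2.2, hφ.2.2.2]

end Shriek

theorem statement4_general {P Q D DQ : Type}
    [Ring P] [Algebra ℚ P] [Ring Q] [Algebra ℚ Q]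
    [AddCommGroup D] [Module ℚ D] [AddCommGroup DQ] [Module ℚ DQ]
    (SP : CDGAStruct P) (SQ : CDGAStruct Q) (n : ℕ)
    (SPm : DGModStruct SP P) (hself : IsSelfMod SP SPm)
    (SD : DGModStruct SP D) (dualP : DualRep SP SPm (n : ℤ) SD)
    (θ : P →ₗ[ℚ] D) (hθ : IsDGModHom SPm SD θ) (hθbij : Function.Bijective θ)
    (φ : P →ₗ[ℚ] Q) (hφ : IsCDGAHom SP SQ φ)
    (SQself : DGModStruct SQ Q) (hQself : IsSelfMod SQ SQself)
    (SQP : DGModStruct SP Q) (hQP : IsModViaHom SP SQ φ SQself SQP)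
    (SDQ : DGModStruct SP DQ) (dualQ : DualRep SP SQP (n : ℤ) SDQ)
    (ψ : DQ →ₗ[ℚ] D)
    (hψ : ∀ (x : DQ) (p : P), dualP.pair (ψ x) p = dualQ.pair x (φ p))
    (sh : DQ →ₗ[ℚ] P) (hsh : θ ∘ₗ sh = ψ)
    (SDQQ : DGModStruct SQ DQ) (hDQQ : IsModViaHom SP SQ φ SDQQ SDQ)
    (hbal : IsBalanced SQ SDQQ (φ ∘ₗ sh))
    -- the semi-trivial products on the two mapping cones
    (μP : P × DQ →ₗ[ℚ] P × DQ →ₗ[ℚ] P × DQ) (hμP : SemiTrivialMul SP SDQ μP)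
    (μQ : Q × DQ →ₗ[ℚ] Q × DQ →ₗ[ℚ] Q × DQ) (hμQ : SemiTrivialMul SQ SDQQ μQ) :
    IsGCDGA (coneGr SP SDQ) ((1 : P), (0 : DQ)) μP (coneD SP SDQ sh) ∧
    IsGCDGA (coneGr SQ SDQQ) ((1 : Q), (0 : DQ)) μQ (coneD SQ SDQQ (φ ∘ₗ sh)) ∧
    IsGradedDGAHom (coneGr SP SDQ) ((1 : P), (0 : DQ)) μP (coneD SP SDQ sh)
      (coneGr SQ SDQQ) ((1 : Q), (0 : DQ)) μQ (coneD SQ SDQQ (φ ∘ₗ sh))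
      (φ.prodMap LinearMap.id) := by
  have hφP : IsDGModHom SPm SQP φ := hφ.isDGModHom hself hQself hQP
  have hψP : IsDGModHom SDQ SD ψ := dualP.isDGModHom_transpose dualQ hφP hψ
  have hshP : IsDGHomToAlg SP SDQ sh :=
    (hθ.of_comp_injective hθbij.1 (hsh ▸ hψP)).isDGHomToAlg hself
  have hker : ∀ s, ∀ y ∈ SDQ.gr s, (∀ p ∈ SP.grZ (n - s), dualQ.pair y (φ p) = 0) → sh y = 0 :=
    fun s y hy h => hθbij.1 <| by
      rw [← LinearMap.comp_apply, hsh, map_zero]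
      exact dualP.transpose_eq_zero dualQ hφP.1 hψ hy fun p hp => h p (hself.1 _ ▸ hp)
  exact ⟨cone_isGCDGA SP SDQ hμP hshP (hbal.of_comp hDQQ),
    cone_isGCDGA SQ SDQQ hμQ
      (isDGHomToAlg_comp_shriek dualQ hφ hQself hQP hDQQ hshP hbal hker) hbal,
    cone_prodMap_isGradedDGAHom hφ hDQQ sh hμP hμQ⟩

/-- Let `φ : P → Q` be a morphism of connected CDGAs with `P`
a Poincaré duality CDGA in dimension `n`, let
`φ^! := θ_P⁻¹ ∘ (s^{-n}#φ) : s^{-n}#Q → P`, and assume `φ ∘ φ^!` is balanced.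
Then the mapping cones `P ⊕_{φ^!} ss^{-n}#Q` and `Q ⊕_{φφ^!} ss^{-n}#Q`, each
equipped with the semi-trivial structure, are CDGAs, and the map
`φ ⊕ id : (p, sx) ↦ (φ(p), sx)` is a morphism of CDGAs. -/
theorem statement4 {P Q D DQ : Type}
    [Ring P] [Algebra ℚ P] [Ring Q] [Algebra ℚ Q]
    [AddCommGroup D] [Module ℚ D] [AddCommGroup DQ] [Module ℚ DQ]
    (SP : CDGAStruct P) (SQ : CDGAStruct Q) (n : ℕ)
    (hPconn : SP.Connected) (hPft : SP.FiniteType) (hQconn : SQ.Connected)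
    (SPm : DGModStruct SP P) (hself : IsSelfMod SP SPm)
    (SD : DGModStruct SP D) (dualP : DualRep SP SPm (n : ℤ) SD)
    (θ : P →ₗ[ℚ] D) (hθ : IsDGModHom SPm SD θ) (hθbij : Function.Bijective θ)
    (φ : P →ₗ[ℚ] Q) (hφ : IsCDGAHom SP SQ φ)
    (SQself : DGModStruct SQ Q) (hQself : IsSelfMod SQ SQself)
    (SQP : DGModStruct SP Q) (hQP : IsModViaHom SP SQ φ SQself SQP)
    (SDQ : DGModStruct SP DQ) (dualQ : DualRep SP SQP (n : ℤ) SDQ)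
    (ψ : DQ →ₗ[ℚ] D)
    (hψ : ∀ (x : DQ) (p : P), dualP.pair (ψ x) p = dualQ.pair x (φ p))
    (sh : DQ →ₗ[ℚ] P) (hsh : θ ∘ₗ sh = ψ)
    (SDQQ : DGModStruct SQ DQ) (hDQQ : IsModViaHom SP SQ φ SDQQ SDQ)
    (hbal : IsBalanced SQ SDQQ (φ ∘ₗ sh))
    -- the semi-trivial products on the two mapping cones
    (μP : P × DQ →ₗ[ℚ] P × DQ →ₗ[ℚ] P × DQ) (hμP : SemiTrivialMul SP SDQ μP)
    (μQ : Q × DQ →ₗ[ℚ] Q × DQ →ₗ[ℚ] Q × DQ) (hμQ : SemiTrivialMul SQ SDQQ μQ) :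
    IsGCDGA (coneGr SP SDQ) ((1 : P), (0 : DQ)) μP (coneD SP SDQ sh) ∧
    IsGCDGA (coneGr SQ SDQQ) ((1 : Q), (0 : DQ)) μQ (coneD SQ SDQQ (φ ∘ₗ sh)) ∧
    IsGradedDGAHom (coneGr SP SDQ) ((1 : P), (0 : DQ)) μP (coneD SP SDQ sh)
      (coneGr SQ SDQQ) ((1 : Q), (0 : DQ)) μQ (coneD SQ SDQQ (φ ∘ₗ sh))
      (φ.prodMap LinearMap.id) :=
  statement4_general SP SQ n SPm hself SD dualP θ hθ hθbij φ hφ SQself hQself SQP hQP SDQ dualQ ψ hψ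
    sh hsh SDQQ hDQQ hbal μP hμP μQ hμQ
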